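/- The map sending (b, u, v) ∈ Th(E ⊕ F) with v ≠ 0 to the triple (v/|v|, u, log(|v|) · v/|v|) is well-defined and injective from the complement of Th(E) in Th(E ⊕ F) (minus the basepoint) to the total space of p*E ⊕ L over the sphere bundle S(F). -/
import Mathlib


open Bundle

/-!
STATEMENT 1.  The map sending `(b, u, v) ∈ Th(E ⊕ F)` with `v ≠ 0` to the
triple `(v/|v|, u, log(|v|)·v/|v|)` is well-defined and injective from the
complement of `Th(E)` in `Th(E ⊕ F)` (minus the basepoint) to the total space
of `p*E ⊕ L` over the sphere bundle `S(F)`.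

`E` and `F` are real vector bundles with inner products over `B`; the domain
is the set of triples `(b ∈ B, u ∈ E_b, v ∈ F_b \ {0})`, modelled as a
subspace of `TotalSpace E × TotalSpace F`; the total space of `p*E ⊕ L` is
modelled, via the canonical trivialization `(v, t) ↦ t·v` of the tautological
line bundle `L` on `S(F)`, as the set of triples `(v ∈ S(F), u ∈ E_{p v},
t ∈ ℝ)`, and `log(|v|)·v/|v| ∈ L_{v/|v|}` corresponds to the coefficient
`t = log |v|`.  Well-definedness is expressed by the existence of a map into
the (sub)space of such triples with the prescribed coordinates.
-/

theorem thom_quotient_map_well_defined_and_injective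
    {B : Type} [TopologicalSpace B]
    (kE kF : ℕ)
    (E F : B → Type)
    [∀ b, NormedAddCommGroup (E b)] [∀ b, InnerProductSpace ℝ (E b)]
    [∀ b, NormedAddCommGroup (F b)] [∀ b, InnerProductSpace ℝ (F b)]
    [TopologicalSpace (TotalSpace (EuclideanSpace ℝ (Fin kE)) E)]
    [FiberBundle (EuclideanSpace ℝ (Fin kE)) E]
    [VectorBundle ℝ (EuclideanSpace ℝ (Fin kE)) E]
    [TopologicalSpace (TotalSpace (EuclideanSpace ℝ (Fin kF)) F)]
    [FiberBundle (EuclideanSpace ℝ (Fin kF)) F]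
    [VectorBundle ℝ (EuclideanSpace ℝ (Fin kF)) F] :
    ∃ φ : {z : TotalSpace (EuclideanSpace ℝ (Fin kE)) E ×
               TotalSpace (EuclideanSpace ℝ (Fin kF)) F //
             z.1.proj = z.2.proj ∧ z.2.snd ≠ 0} →
          {z : TotalSpace (EuclideanSpace ℝ (Fin kF)) F ×
               TotalSpace (EuclideanSpace ℝ (Fin kE)) E × ℝ //
             ‖z.1.snd‖ = 1 ∧ z.2.1.proj = z.1.proj},
      (∀ x, (φ x).1.1 = ⟨x.1.2.proj, ‖x.1.2.snd‖⁻¹ • x.1.2.snd⟩ ∧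
            (φ x).1.2.1 = x.1.1 ∧
            (φ x).1.2.2 = Real.log ‖x.1.2.snd‖) ∧
      Function.Injective φ := by

  refine ⟨fun x => ⟨(⟨x.1.2.proj, ‖x.1.2.snd‖⁻¹ • x.1.2.snd⟩, x.1.1,
      Real.log ‖x.1.2.snd‖), ?_, x.2.1⟩, fun x => ⟨rfl, rfl, rfl⟩, ?_⟩
  · have hv : x.1.2.snd ≠ 0 := x.2.2
    simp [norm_smul, inv_mul_cancel₀ (norm_ne_zero_iff.mpr hv)]
  · intro x y h
    have h' := Subtype.ext_iff.mp h
    simp only [Prod.mk.injEq] at h'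
    obtain ⟨h1, h2, h3⟩ := h'
    have hvx : x.1.2.snd ≠ 0 := x.2.2
    have hvy : y.1.2.snd ≠ 0 := y.2.2
    have hn : ‖x.1.2.snd‖ = ‖y.1.2.snd‖ :=
      Real.log_injOn_pos (Set.mem_Ioi.mpr (norm_pos_iff.mpr hvx))
        (Set.mem_Ioi.mpr (norm_pos_iff.mpr hvy)) h3
    set g : ℝ → TotalSpace (EuclideanSpace ℝ (Fin kF)) F →
        TotalSpace (EuclideanSpace ℝ (Fin kF)) F :=
      fun c z => ⟨z.proj, c • z.snd⟩ with hg
    have hx : x.1.2 = g ‖x.1.2.snd‖ ⟨x.1.2.proj, ‖x.1.2.snd‖⁻¹ • x.1.2.snd⟩ := by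
      simp [hg, smul_inv_smul₀ (norm_ne_zero_iff.mpr hvx)]
    have hy : y.1.2 = g ‖y.1.2.snd‖ ⟨y.1.2.proj, ‖y.1.2.snd‖⁻¹ • y.1.2.snd⟩ := by
      simp [hg, smul_inv_smul₀ (norm_ne_zero_iff.mpr hvy)]
    have h12 : x.1.2 = y.1.2 := by
      rw [hn] at h1
      rw [hx, hy, hn]
      exact congrArg _ h1
    exact Subtype.ext (Prod.ext h2 h12)
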